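/- Let $f,g$ be nonnegative, radially symmetric, radially nonincreasing (rearranged) locally integrable functions on $\mathbb{R}^N$, with $g(x)\to 0$ as $|x|\to\infty$. If $\int_{B_R(0)} f\,dx \le \int_{B_R(0)} g\,dx$ for all $R>0$, then for every convex nondecreasing function $\Phi:[0,\infty)\to[0,\infty)$ with $\Phi(0)=0$ one has $\int_{\mathbb{R}^N}\Phi(f(x))\,dx \le \int_{\mathbb{R}^N}\Phi(g(x))\,dx$. -/

import Mathlib

/-!
Since `f` is radially nonincreasing, inside any ball its superlevel set `{s < f}` is, up to a null
sphere, a centered ball `B`; there `(f - s)⁺ = f - s`, so the concentration inequality gives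
`∫ (f - s)⁺ ≤ ∫_B (f - s) ≤ ∫_B (g - s) ≤ ∫ (g - s)⁺`. A convex nondecreasing `Φ` with `Φ 0 = 0`
is the pointwise limit from below of nonnegative combinations of hinges `t ↦ (t - s)⁺`, `s ≥ 0`
(shifted chord interpolations of `Φ` on finer and finer grids), and Fatou's lemma carries the
inequality over to `Φ`.
-/

open MeasureTheory Metric Filter Topology
open scoped ENNReal

noncomputable def gridSlope (Φ : ℝ → ℝ) (h : ℝ) (k : ℕ) : ℝ :=
  (Φ ((k + 1) * h) - Φ (k * h)) / h

noncomputable def slopeJump (Φ : ℝ → ℝ) (h : ℝ) : ℕ → ℝ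
  | 0 => gridSlope Φ h 0
  | k + 1 => gridSlope Φ h (k + 1) - gridSlope Φ h k

/-- The chord interpolation of `Φ` on the grid `h ℕ`, shifted right by one step `h` (which puts it
below `Φ`), written as a combination of hinges and truncated after `K` slope changes. -/
noncomputable def hingeApprox (Φ : ℝ → ℝ) (h : ℝ) (K : ℕ) (t : ℝ) : ℝ :=
  ∑ k ∈ Finset.range K, slopeJump Φ h k * max (t - (k + 1) * h) 0

section HingeApprox

variable {Φ : ℝ → ℝ} {h : ℝ}

lemma gridSlope_mul (hh : 0 < h) (k : ℕ) :
    gridSlope Φ h k * h = Φ ((k + 1) * h) - Φ (k * h) :=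
  div_mul_cancel₀ _ hh.ne'

lemma gridSlope_nonneg (hΦm : MonotoneOn Φ (Set.Ici 0)) (hh : 0 < h) (k : ℕ) :
    0 ≤ gridSlope Φ h k := by
  have hk : (0 : ℝ) ≤ k := k.cast_nonneg
  exact div_nonneg (sub_nonneg.2 (hΦm (Set.mem_Ici.2 (by positivity))
    (Set.mem_Ici.2 (by positivity)) (by nlinarith))) hh.le

lemma gridSlope_le_succ (hΦc : ConvexOn ℝ (Set.Ici 0) Φ) (hh : 0 < h) (k : ℕ) :
    gridSlope Φ h k ≤ gridSlope Φ h (k + 1) := by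
  have hk : (0 : ℝ) ≤ k := k.cast_nonneg
  have := hΦc.slope_mono_adjacent (x := k * h) (y := (k + 1) * h) (z := (k + 2) * h)
    (by simp only [Set.mem_Ici]; positivity) (by simp only [Set.mem_Ici]; positivity)
    (by nlinarith) (by nlinarith)
  rw [show (k + 1) * h - k * h = h by ring, show (k + 2) * h - (k + 1) * h = h by ring] at this
  simpa only [gridSlope, Nat.cast_succ, add_assoc, one_add_one_eq_two] using this

lemma slopeJump_nonneg (hΦc : ConvexOn ℝ (Set.Ici 0) Φ) (hΦm : MonotoneOn Φ (Set.Ici 0))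
    (hh : 0 < h) : ∀ k, 0 ≤ slopeJump Φ h k
  | 0 => gridSlope_nonneg hΦm hh 0
  | k + 1 => sub_nonneg.2 (gridSlope_le_succ hΦc hh k)

lemma add_gridSlope_mul_le (hΦc : ConvexOn ℝ (Set.Ici 0) Φ) (hh : 0 < h) (k : ℕ) {t : ℝ}
    (ht : (k + 1) * h ≤ t) : Φ ((k + 1) * h) + gridSlope Φ h k * (t - (k + 1) * h) ≤ Φ t := by
  have hk : (0 : ℝ) ≤ k := k.cast_nonneg
  rcases ht.eq_or_lt with rfl | ht
  · simp
  have := hΦc.slope_mono_adjacent (x := k * h) (y := (k + 1) * h) (z := t)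
    (by simp only [Set.mem_Ici]; positivity) (by simp only [Set.mem_Ici]; nlinarith)
    (by nlinarith) ht
  rw [show (k + 1) * h - k * h = h by ring, le_div_iff₀ (sub_pos.2 ht)] at this
  rw [gridSlope]
  linarith

lemma hingeApprox_zero_left (t : ℝ) : hingeApprox Φ h 0 t = 0 := by
  simp [hingeApprox]

lemma hingeApprox_succ (K : ℕ) (t : ℝ) :
    hingeApprox Φ h (K + 1) t = hingeApprox Φ h K t + slopeJump Φ h K * max (t - (K + 1) * h) 0 :=
  Finset.sum_range_succ _ _

lemma hingeApprox_succ_eq (hΦ0 : Φ 0 = 0) (hh : 0 < h) :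
    ∀ (K : ℕ) {t : ℝ}, (K + 1) * h ≤ t →
      hingeApprox Φ h (K + 1) t = Φ (K * h) + gridSlope Φ h K * (t - (K + 1) * h)
  | 0, t, ht => by
    simp only [Nat.cast_zero, zero_add, one_mul] at ht
    simp [hingeApprox_succ, hingeApprox_zero_left, slopeJump, hΦ0, max_eq_left (sub_nonneg.2 ht)]
  | K + 1, t, ht => by
    rw [hingeApprox_succ, hingeApprox_succ_eq hΦ0 hh K (le_trans (by push_cast; nlinarith) ht),
      max_eq_left (sub_nonneg.2 ht), slopeJump]
    have := gridSlope_mul (Φ := Φ) hh K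
    push_cast at this ⊢
    linear_combination this


lemma hingeApprox_nonneg (hΦc : ConvexOn ℝ (Set.Ici 0) Φ) (hΦm : MonotoneOn Φ (Set.Ici 0))
    (hh : 0 < h) (K : ℕ) (t : ℝ) : 0 ≤ hingeApprox Φ h K t :=
  Finset.sum_nonneg fun k _ => mul_nonneg (slopeJump_nonneg hΦc hΦm hh k) (le_max_right _ _)

lemma hingeApprox_le (hΦc : ConvexOn ℝ (Set.Ici 0) Φ) (hΦm : MonotoneOn Φ (Set.Ici 0))
    (hΦ0 : Φ 0 = 0) (hh : 0 < h) : ∀ (K : ℕ) {t : ℝ}, 0 ≤ t → hingeApprox Φ h K t ≤ Φ t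
  | 0, t, ht => by
    rw [hingeApprox_zero_left, ← hΦ0]
    exact hΦm Set.self_mem_Ici ht ht
  | K + 1, t, ht => by
    rcases le_or_gt t ((K + 1) * h) with htK | htK
    · rw [hingeApprox_succ, max_eq_right (sub_nonpos.2 htK), mul_zero, add_zero]
      exact hingeApprox_le hΦc hΦm hΦ0 hh K ht
    · rw [hingeApprox_succ_eq hΦ0 hh K htK.le]
      have := add_gridSlope_mul_le hΦc hh K htK.le
      have := gridSlope_mul (Φ := Φ) hh K
      have := gridSlope_nonneg hΦm hh K
      nlinarith

lemma le_hingeApprox (hΦc : ConvexOn ℝ (Set.Ici 0) Φ) (hΦm : MonotoneOn Φ (Set.Ici 0))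
    (hΦ0 : Φ 0 = 0) (hh : 0 < h) {j K : ℕ} (hjK : j < K) {t : ℝ} (ht : (j + 1) * h ≤ t) :
    Φ (j * h) ≤ hingeApprox Φ h K t := calc
  Φ (j * h) ≤ Φ (j * h) + gridSlope Φ h j * (t - (j + 1) * h) :=
    le_add_of_nonneg_right (mul_nonneg (gridSlope_nonneg hΦm hh j) (sub_nonneg.2 ht))
  _ = hingeApprox Φ h (j + 1) t := (hingeApprox_succ_eq hΦ0 hh j ht).symm
  _ ≤ hingeApprox Φ h K t :=
    Finset.sum_le_sum_of_subset_of_nonneg (Finset.range_subset_range.2 hjK) fun k _ _ =>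
      mul_nonneg (slopeJump_nonneg hΦc hΦm hh k) (le_max_right _ _)

lemma le_hingeApprox_sub (hΦc : ConvexOn ℝ (Set.Ici 0) Φ) (hΦm : MonotoneOn Φ (Set.Ici 0))
    (hΦ0 : Φ 0 = 0) (hh : 0 < h) {K : ℕ} {t : ℝ} (h2t : 2 * h ≤ t) (htK : t < K * h) :
    Φ (t - 2 * h) ≤ hingeApprox Φ h K t := by
  -- the grid point `j h` with `j = ⌊t / h⌋ - 1` lies in `(t - 2 h, t - h]`
  have hth : 0 ≤ t / h := div_nonneg (by linarith) hh.le
  obtain ⟨j, hj⟩ : ∃ j, ⌊t / h⌋₊ = j + 1 :=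
    Nat.exists_eq_add_one.2 (Nat.floor_pos.2 ((one_le_div hh).2 (by linarith)))
  have hlow : ((j : ℝ) + 1) * h ≤ t := by
    have := Nat.floor_le hth
    rw [hj, Nat.cast_succ, le_div_iff₀ hh] at this
    exact this
  have hhigh : t - 2 * h ≤ j * h := by
    have := Nat.lt_floor_add_one (t / h)
    rw [hj, Nat.cast_succ, div_lt_iff₀ hh] at this
    linarith
  have hjK : j < K := by
    have : ⌊t / h⌋₊ < K := Nat.floor_lt hth |>.2 ((div_lt_iff₀ hh).2 htK)
    omega
  exact (hΦm (Set.mem_Ici.2 (by linarith)) (Set.mem_Ici.2 (by linarith)) hhigh).trans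
    (le_hingeApprox hΦc hΦm hΦ0 hh hjK hlow)

lemma tendsto_hingeApprox (hΦc : ConvexOn ℝ (Set.Ici 0) Φ) (hΦm : MonotoneOn Φ (Set.Ici 0))
    (hΦ0 : Φ 0 = 0) {t : ℝ} (ht : 0 ≤ t) :
    Tendsto (fun n : ℕ => hingeApprox Φ ((n : ℝ) + 1)⁻¹ ((n + 1) ^ 2) t) atTop (𝓝 (Φ t)) := by
  have hh (n : ℕ) : (0 : ℝ) < ((n : ℝ) + 1)⁻¹ := by positivity
  have hle (n : ℕ) := hingeApprox_le hΦc hΦm hΦ0 (hh n) ((n + 1) ^ 2) ht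
  rcases ht.eq_or_lt with rfl | ht
  · refine tendsto_const_nhds.congr fun n => ?_
    exact ((hle n).antisymm (by rw [hΦ0]; exact hingeApprox_nonneg hΦc hΦm (hh n) _ _)).symm
  have hcont : ContinuousAt Φ t :=
    (hΦc.continuousOn_interior t (by simpa using ht)).continuousAt
      (by simpa using Ioi_mem_nhds ht)
  have hlim : Tendsto (fun n : ℕ => Φ (t - 2 * ((n : ℝ) + 1)⁻¹)) atTop (𝓝 (Φ t)) := by
    refine hcont.tendsto.comp ?_
    simpa using tendsto_const_nhds.sub
      ((tendsto_inv_atTop_zero.comp (tendsto_natCast_atTop_atTop.atTop_add tendsto_const_nhds)).const_mul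
        (2 : ℝ))
  refine tendsto_of_tendsto_of_tendsto_of_le_of_le' hlim tendsto_const_nhds ?_
    (Eventually.of_forall hle)
  filter_upwards [eventually_gt_atTop ⌈2 / t⌉₊, eventually_gt_atTop ⌈t⌉₊] with n h2 ht1
  replace h2 : 2 / t < n + 1 := (Nat.le_ceil _).trans_lt (by exact_mod_cast h2.trans n.lt_succ_self)
  replace ht1 : t < n + 1 := (Nat.le_ceil t).trans_lt (by exact_mod_cast ht1.trans n.lt_succ_self)
  refine le_hingeApprox_sub hΦc hΦm hΦ0 (hh n) ?_ ?_
  · rw [← div_eq_mul_inv, div_le_iff₀ (by positivity)]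
    rw [div_lt_iff₀ ht] at h2
    linarith
  · push_cast
    rw [sq, mul_assoc, mul_inv_cancel₀ (by positivity), mul_one]
    exact ht1

end HingeApprox

section Majorization

variable {α : Type*} [MeasurableSpace α] {μ : Measure α}

lemma lintegral_ofReal_hingeSum {ι : Type*} (I : Finset ι) {a : ι → ℝ} (ha : ∀ i ∈ I, 0 ≤ a i)
    (s : ι → ℝ) {F : α → ℝ} (hF : AEMeasurable F μ) :
    ∫⁻ x, ENNReal.ofReal (∑ i ∈ I, a i * max (F x - s i) 0) ∂μ =
      ∑ i ∈ I, ENNReal.ofReal (a i) * ∫⁻ x, ENNReal.ofReal (F x - s i) ∂μ := by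
  have hFs (i : ι) : AEMeasurable (fun x => ENNReal.ofReal (F x - s i)) μ :=
    (hF.sub_const _).ennreal_ofReal
  calc ∫⁻ x, ENNReal.ofReal (∑ i ∈ I, a i * max (F x - s i) 0) ∂μ
      = ∫⁻ x, ∑ i ∈ I, ENNReal.ofReal (a i) * ENNReal.ofReal (F x - s i) ∂μ := by
        refine lintegral_congr fun x => ?_
        rw [ENNReal.ofReal_sum_of_nonneg fun i hi => mul_nonneg (ha i hi) (le_max_right _ _)]
        refine Finset.sum_congr rfl fun i hi => ?_
        rw [ENNReal.ofReal_mul (ha i hi), ENNReal.ofReal_max, ENNReal.ofReal_zero, max_eq_left zero_le]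
    _ = ∑ i ∈ I, ENNReal.ofReal (a i) * ∫⁻ x, ENNReal.ofReal (F x - s i) ∂μ := by
        rw [lintegral_finsetSum' _ fun i _ => (hFs i).const_mul _]
        exact Finset.sum_congr rfl fun i _ => lintegral_const_mul'' _ (hFs i)

theorem lintegral_ofReal_comp_le_of_lintegral_ofReal_sub_le {F G : α → ℝ}
    (hF : AEMeasurable F μ) (hG : AEMeasurable G μ) (hF0 : ∀ x, 0 ≤ F x) (hG0 : ∀ x, 0 ≤ G x)
    (hFG : ∀ s, 0 ≤ s → ∫⁻ x, ENNReal.ofReal (F x - s) ∂μ ≤ ∫⁻ x, ENNReal.ofReal (G x - s) ∂μ)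
    {Φ : ℝ → ℝ} (hΦc : ConvexOn ℝ (Set.Ici 0) Φ) (hΦm : MonotoneOn Φ (Set.Ici 0))
    (hΦ0 : Φ 0 = 0) :
    ∫⁻ x, ENNReal.ofReal (Φ (F x)) ∂μ ≤ ∫⁻ x, ENNReal.ofReal (Φ (G x)) ∂μ := by
  set S : ℕ → ℝ → ℝ := fun n => hingeApprox Φ ((n : ℝ) + 1)⁻¹ ((n + 1) ^ 2)
  have hh (n : ℕ) : (0 : ℝ) < ((n : ℝ) + 1)⁻¹ := by positivity
  have hS (n : ℕ) : ∫⁻ x, ENNReal.ofReal (S n (F x)) ∂μ ≤ ∫⁻ x, ENNReal.ofReal (S n (G x)) ∂μ := by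
    have ha k (_ : k ∈ Finset.range ((n + 1) ^ 2)) := slopeJump_nonneg hΦc hΦm (hh n) k
    simp only [S, hingeApprox, lintegral_ofReal_hingeSum _ ha _ hF, lintegral_ofReal_hingeSum _ ha _ hG]
    refine Finset.sum_le_sum fun k _ => mul_le_mul_right (hFG _ (by positivity)) _
  have hSm (n : ℕ) : AEMeasurable (fun x => ENNReal.ofReal (S n (F x))) μ := by
    have : Continuous fun t => S n t := by simp only [S, hingeApprox]; fun_prop
    exact (this.measurable.comp_aemeasurable hF).ennreal_ofReal
  calc ∫⁻ x, ENNReal.ofReal (Φ (F x)) ∂μ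
      = ∫⁻ x, liminf (fun n => ENNReal.ofReal (S n (F x))) atTop ∂μ :=
        lintegral_congr fun x => ((ENNReal.continuous_ofReal.tendsto _).comp
          (tendsto_hingeApprox hΦc hΦm hΦ0 (hF0 x))).liminf_eq.symm
    _ ≤ liminf (fun n => ∫⁻ x, ENNReal.ofReal (S n (F x)) ∂μ) atTop := lintegral_liminf_le' hSm
    _ ≤ ∫⁻ x, ENNReal.ofReal (Φ (G x)) ∂μ := by
        refine liminf_le_of_frequently_le' (Frequently.of_forall fun n => (hS n).trans ?_)
        exact lintegral_mono fun x =>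
          ENNReal.ofReal_le_ofReal (hingeApprox_le hΦc hΦm hΦ0 (hh n) _ (hG0 x))

end Majorization

lemma lintegral_eq_iSup_setLIntegral_ball {X : Type*} [PseudoMetricSpace X] [MeasurableSpace X]
    (μ : Measure X) (c : X) (F : X → ℝ≥0∞) :
    ∫⁻ x, F x ∂μ = ⨆ n : ℕ, ∫⁻ x in ball c n, F x ∂μ := by
  rw [← setLIntegral_univ, ← iUnion_ball_nat c]
  exact setLIntegral_iUnion_of_directed F
    (Monotone.directed_le fun _ _ hmn => ball_subset_ball (Nat.cast_le.2 hmn))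

lemma ofReal_integral_le_lintegral_ofReal {α : Type*} [MeasurableSpace α] {μ : Measure α}
    {f : α → ℝ} (hf : Integrable f μ) :
    ENNReal.ofReal (∫ x, f x ∂μ) ≤ ∫⁻ x, ENNReal.ofReal (f x) ∂μ := by
  rw [integral_eq_lintegral_pos_part_sub_lintegral_neg_part hf]
  exact (ENNReal.ofReal_le_ofReal (sub_le_self _ ENNReal.toReal_nonneg)).trans
    ENNReal.ofReal_toReal_le

lemma exists_radius_superlevelSet {E : Type*} [SeminormedAddCommGroup E] {f : E → ℝ}
    (hfr : ∀ x y : E, ‖x‖ ≤ ‖y‖ → f y ≤ f x) (s R : ℝ) :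
    ∃ r, (∀ x, ‖x‖ < r → s < f x) ∧ ∀ x, r < ‖x‖ → ‖x‖ < R → f x ≤ s := by
  set S : Set ℝ := {r | r ≤ max R 0 ∧ ∀ x : E, ‖x‖ < r → s < f x}
  have h0S : (0 : ℝ) ∈ S := ⟨le_max_right _ _, fun x hx => absurd hx (norm_nonneg x).not_gt⟩
  have hbdd : BddAbove S := ⟨max R 0, fun r hr => hr.1⟩
  refine ⟨sSup S, fun x hx => ?_, fun x hx hxR => ?_⟩
  · obtain ⟨r, hrS, hxr⟩ := exists_lt_of_lt_csSup ⟨0, h0S⟩ hx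
    exact hrS.2 x hxr
  · by_contra! hsx
    have hxS : ‖x‖ ∈ S :=
      ⟨hxR.le.trans (le_max_left _ _), fun y hy => hsx.trans_le (hfr y x hy.le)⟩
    exact hx.not_ge (le_csSup hbdd hxS)

section Concentration

variable {E : Type*} [NormedAddCommGroup E] [NormedSpace ℝ E] [MeasurableSpace E] [BorelSpace E]
  [FiniteDimensional ℝ E] (μ : Measure E) [μ.IsAddHaarMeasure] {f g : E → ℝ}

lemma setLIntegral_ball_ofReal_sub_le [Nontrivial E] (hfr : ∀ x y : E, ‖x‖ ≤ ‖y‖ → f y ≤ f x)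
    (hfl : LocallyIntegrable f μ) (hgl : LocallyIntegrable g μ)
    (hconc : ∀ R > (0 : ℝ), ∫ x in ball (0 : E) R, f x ∂μ ≤ ∫ x in ball (0 : E) R, g x ∂μ)
    (s R : ℝ) :
    ∫⁻ x in ball (0 : E) R, ENNReal.ofReal (f x - s) ∂μ ≤ ∫⁻ x, ENNReal.ofReal (g x - s) ∂μ := by
  obtain ⟨r, hin, hout⟩ := exists_radius_superlevelSet hfr s R
  have hint {φ : E → ℝ} (hφ : LocallyIntegrable φ μ) : IntegrableOn φ (ball 0 r) μ :=
    (hφ.integrableOn_isCompact (isCompact_closedBall 0 r)).mono_set ball_subset_closedBall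
  have hs : IntegrableOn (fun _ => s) (ball (0 : E) r) μ := integrableOn_const measure_ball_lt_top.ne
  have hsphere : ∀ᵐ x ∂μ, x ∉ sphere (0 : E) r :=
    measure_eq_zero_iff_ae_notMem.1 (Measure.addHaar_sphere μ 0 r)
  have hfg : ∫ x in ball (0 : E) r, f x ∂μ ≤ ∫ x in ball (0 : E) r, g x ∂μ := by
    rcases lt_or_ge 0 r with hr | hr
    · exact hconc r hr
    · simp [ball_eq_empty.2 hr]
  calc ∫⁻ x in ball (0 : E) R, ENNReal.ofReal (f x - s) ∂μ
      ≤ ∫⁻ x in ball (0 : E) R, (ball 0 r).indicator (fun x => ENNReal.ofReal (f x - s)) x ∂μ := by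
        refine setLIntegral_mono_ae' measurableSet_ball ?_
        filter_upwards [hsphere] with x hxr hxR
        rcases lt_or_gt_of_ne (mem_sphere_zero_iff_norm.not.1 hxr) with hx | hx
        · rw [Set.indicator_of_mem (mem_ball_zero_iff.2 hx)]
        · rw [ENNReal.ofReal_of_nonpos (sub_nonpos.2 (hout x hx (mem_ball_zero_iff.1 hxR)))]
          exact zero_le
    _ ≤ ∫⁻ x in ball (0 : E) r, ENNReal.ofReal (f x - s) ∂μ :=
        (setLIntegral_le_lintegral _ _).trans_eq (lintegral_indicator measurableSet_ball _)
    _ = ENNReal.ofReal (∫ x in ball (0 : E) r, (f x - s) ∂μ) :=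
        (ofReal_integral_eq_lintegral_ofReal ((hint hfl).sub hs) ((ae_restrict_iff' measurableSet_ball).2
          (Eventually.of_forall fun x hx => sub_nonneg.2 (hin x (mem_ball_zero_iff.1 hx)).le))).symm
    _ ≤ ENNReal.ofReal (∫ x in ball (0 : E) r, (g x - s) ∂μ) := by
        refine ENNReal.ofReal_le_ofReal ?_
        rw [integral_sub (hint hfl) hs, integral_sub (hint hgl) hs]
        linarith
    _ ≤ ∫⁻ x in ball (0 : E) r, ENNReal.ofReal (g x - s) ∂μ :=
        ofReal_integral_le_lintegral_ofReal ((hint hgl).sub hs)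
    _ ≤ ∫⁻ x, ENNReal.ofReal (g x - s) ∂μ := setLIntegral_le_lintegral _ _


lemma lintegral_ofReal_sub_le_of_setIntegral_ball_le [Nontrivial E]
    (hfr : ∀ x y : E, ‖x‖ ≤ ‖y‖ → f y ≤ f x)
    (hfl : LocallyIntegrable f μ) (hgl : LocallyIntegrable g μ)
    (hconc : ∀ R > (0 : ℝ), ∫ x in ball (0 : E) R, f x ∂μ ≤ ∫ x in ball (0 : E) R, g x ∂μ)
    (s : ℝ) : ∫⁻ x, ENNReal.ofReal (f x - s) ∂μ ≤ ∫⁻ x, ENNReal.ofReal (g x - s) ∂μ := by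
  rw [lintegral_eq_iSup_setLIntegral_ball μ 0]
  exact iSup_le fun n => setLIntegral_ball_ofReal_sub_le μ hfr hfl hgl hconc s n

end Concentration

theorem stmt1_general (N : ℕ) (hN : 1 ≤ N)
    (f g : EuclideanSpace ℝ (Fin N) → ℝ)
    (hf0 : ∀ x, 0 ≤ f x) (hg0 : ∀ x, 0 ≤ g x)
    (hfr : ∀ x y : EuclideanSpace ℝ (Fin N), ‖x‖ ≤ ‖y‖ → f y ≤ f x)
    (hfl : LocallyIntegrable f volume) (hgl : LocallyIntegrable g volume)
    (hconc : ∀ R > (0:ℝ),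
      ∫ x in ball (0 : EuclideanSpace ℝ (Fin N)) R, f x ≤
        ∫ x in ball (0 : EuclideanSpace ℝ (Fin N)) R, g x)
    (Φ : ℝ → ℝ) (hΦc : ConvexOn ℝ (Set.Ici 0) Φ) (hΦm : MonotoneOn Φ (Set.Ici 0))
    (hΦ0 : Φ 0 = 0) :
    ∫⁻ x, ENNReal.ofReal (Φ (f x)) ≤ ∫⁻ x, ENNReal.ofReal (Φ (g x)) := by
  have : Nonempty (Fin N) := ⟨⟨0, hN⟩⟩
  exact lintegral_ofReal_comp_le_of_lintegral_ofReal_sub_le hfl.aestronglyMeasurable.aemeasurable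
    hgl.aestronglyMeasurable.aemeasurable hf0 hg0
    (fun s _ => lintegral_ofReal_sub_le_of_setIntegral_ball_le volume hfr hfl hgl hconc s)
    hΦc hΦm hΦ0

/-- Comparison of concentrations implies comparison of integrals of convex
nondecreasing functions of rearranged functions. -/
theorem stmt1 (N : ℕ) (hN : 1 ≤ N)
    (f g : EuclideanSpace ℝ (Fin N) → ℝ)
    (hf0 : ∀ x, 0 ≤ f x) (hg0 : ∀ x, 0 ≤ g x)
    (hfr : ∀ x y : EuclideanSpace ℝ (Fin N), ‖x‖ ≤ ‖y‖ → f y ≤ f x)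
    (hgr : ∀ x y : EuclideanSpace ℝ (Fin N), ‖x‖ ≤ ‖y‖ → g y ≤ g x)
    (hfl : LocallyIntegrable f volume) (hgl : LocallyIntegrable g volume)
    (hgz : Filter.Tendsto g (Bornology.cobounded _) (nhds 0))
    (hconc : ∀ R > (0:ℝ),
      ∫ x in ball (0 : EuclideanSpace ℝ (Fin N)) R, f x ≤
        ∫ x in ball (0 : EuclideanSpace ℝ (Fin N)) R, g x)
    (Φ : ℝ → ℝ) (hΦc : ConvexOn ℝ (Set.Ici 0) Φ) (hΦm : MonotoneOn Φ (Set.Ici 0))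
    (hΦ0 : Φ 0 = 0) (hΦnn : ∀ t ≥ (0:ℝ), 0 ≤ Φ t) :
    ∫⁻ x, ENNReal.ofReal (Φ (f x)) ≤ ∫⁻ x, ENNReal.ofReal (Φ (g x)) :=
  stmt1_general N hN f g hf0 hg0 hfr hfl hgl hconc Φ hΦc hΦm hΦ0
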